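/- arXiv:math/0203030 — 10 statements merged into one kernel-verified Lean document; each statement's English description precedes it below -/
import Mathlib

section
/- Let G be an additive abelian group and η : G → ℂ a positive definite function with η(0) > 0. Then the function ρ(s,t) := |1 − η(s−t)/η(0)|^{1/2} is a translation-invariant pseudometric on G bounded by √2: for all r, s, t, u ∈ G one has ρ(s,s) = 0, ρ(s,t) = ρ(t,s), ρ(s,u) ≤ ρ(s,t) + ρ(t,u), ρ(s+r, t+r) = ρ(s,t), and ρ(s,t) ≤ √2. -/
/-- A function `η : G → ℂ` on an additive abelian group is positive definite if all the
finite double sums `∑ i, ∑ j, c i * conj (c j) * η (x i - x j)` are nonnegative reals. -/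
def IsPositiveDefiniteFn {G : Type*} [AddCommGroup G] (η : G → ℂ) : Prop :=
  ∀ (N : ℕ) (x : Fin N → G) (c : Fin N → ℂ),
    ∃ r : ℝ, 0 ≤ r ∧ ∑ i, ∑ j, c i * (starRingEnd ℂ) (c j) * η (x i - x j) = (r : ℂ)

/-- The autocorrelation pseudometric `ρ(s,t) = |1 − η(s−t)/η(0)|^{1/2}`. -/
noncomputable def acRho {G : Type*} [AddCommGroup G] (η : G → ℂ) (s t : G) : ℝ :=
  Real.sqrt ‖1 - η (s - t) / η 0‖

/-- The set of `ε`-almost periods `P_ε = {t : ρ(t,0) < ε}`. -/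
noncomputable def almostPeriods {G : Type*} [AddCommGroup G] (η : G → ℂ) (ε : ℝ) : Set G :=
  {t : G | acRho η t 0 < ε}

/-!
Positive definiteness makes every matrix `(η (xᵢ - xⱼ))ᵢⱼ` positive semidefinite, hence a Gram
matrix; after normalising, `η (s - t) / η 0 = ⟪p_s, p_t⟫` for unit vectors `p_s`. For unit vectors,
`1 - ⟪p, r⟫ = (1 - ⟪p, q⟫) + (1 - ⟪q, r⟫) + ⟪p - q, q - r⟫`, and
`‖p - q‖² = 2 re (1 - ⟪p, q⟫) ≤ 2 ‖1 - ⟪p, q⟫‖`, so Cauchy–Schwarz on the last term gives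
`‖1 - ⟪p, r⟫‖ ≤ (√‖1 - ⟪p, q⟫‖ + √‖1 - ⟪q, r⟫‖)²`.
-/

open scoped MatrixOrder ComplexOrder InnerProductSpace Matrix

section UnitVectors

variable {𝕜 E : Type*} [RCLike 𝕜] [NormedAddCommGroup E] [InnerProductSpace 𝕜 E] {p q r : E}

lemma norm_one_sub_inner_comm : ‖1 - ⟪q, p⟫_𝕜‖ = ‖1 - ⟪p, q⟫_𝕜‖ := by
  rw [← inner_conj_symm, ← RCLike.norm_conj, map_sub, map_one, RCLike.conj_conj]

lemma norm_one_sub_inner_le_two (hp : ‖p‖ = 1) (hq : ‖q‖ = 1) : ‖1 - ⟪p, q⟫_𝕜‖ ≤ 2 := by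
  calc ‖1 - ⟪p, q⟫_𝕜‖ ≤ ‖(1 : 𝕜)‖ + ‖⟪p, q⟫_𝕜‖ := norm_sub_le _ _
    _ ≤ 1 + ‖p‖ * ‖q‖ := by gcongr; exacts [norm_one.le, norm_inner_le_norm p q]
    _ = 2 := by rw [hp, hq]; norm_num

lemma norm_sub_le_sqrt_two_mul_sqrt_norm_one_sub_inner (hp : ‖p‖ = 1) (hq : ‖q‖ = 1) :
    ‖p - q‖ ≤ √2 * √‖1 - ⟪p, q⟫_𝕜‖ := by
  rw [← Real.sqrt_mul zero_le_two, Real.le_sqrt (norm_nonneg _) (by positivity),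
    norm_sub_sq (𝕜 := 𝕜), hp, hq]
  have hre := RCLike.re_le_norm (1 - ⟪p, q⟫_𝕜)
  rw [map_sub, RCLike.one_re] at hre
  linarith

lemma one_sub_inner_eq_add_add_inner (hq : ‖q‖ = 1) :
    1 - ⟪p, r⟫_𝕜 = (1 - ⟪p, q⟫_𝕜) + (1 - ⟪q, r⟫_𝕜) + ⟪p - q, q - r⟫_𝕜 := by
  simp only [inner_sub_left, inner_sub_right, inner_self_eq_norm_sq_to_K, hq, RCLike.ofReal_one,
    one_pow]
  ring

theorem sqrt_norm_one_sub_inner_le_add (hp : ‖p‖ = 1) (hq : ‖q‖ = 1) (hr : ‖r‖ = 1) :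
    √‖1 - ⟪p, r⟫_𝕜‖ ≤ √‖1 - ⟪p, q⟫_𝕜‖ + √‖1 - ⟪q, r⟫_𝕜‖ := by
  set x := ‖1 - ⟪p, q⟫_𝕜‖
  set y := ‖1 - ⟪q, r⟫_𝕜‖
  refine Real.sqrt_le_iff.mpr ⟨by positivity, ?_⟩
  calc ‖1 - ⟪p, r⟫_𝕜‖ = ‖(1 - ⟪p, q⟫_𝕜) + (1 - ⟪q, r⟫_𝕜) + ⟪p - q, q - r⟫_𝕜‖ := by
        rw [one_sub_inner_eq_add_add_inner hq]
    _ ≤ x + y + ‖p - q‖ * ‖q - r‖ :=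
        norm_add₃_le.trans (by gcongr; exact norm_inner_le_norm _ _)
    _ ≤ x + y + (√2 * √x) * (√2 * √y) := by
        gcongr
        exacts [norm_sub_le_sqrt_two_mul_sqrt_norm_one_sub_inner hp hq,
          norm_sub_le_sqrt_two_mul_sqrt_norm_one_sub_inner hq hr]
    _ = (√x + √y) ^ 2 := by
        rw [add_sq, Real.sq_sqrt (norm_nonneg _), Real.sq_sqrt (norm_nonneg _),
          mul_mul_mul_comm, Real.mul_self_sqrt zero_le_two]
        ring

end UnitVectors

theorem Matrix.PosSemidef.exists_gram_eq {𝕜 n : Type*} [RCLike 𝕜] [Fintype n] {A : Matrix n n 𝕜}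
    (hA : A.PosSemidef) : ∃ v : n → EuclideanSpace 𝕜 n, Matrix.gram 𝕜 v = A := by
  classical
  obtain ⟨B, hB, hBB⟩ : ∃ B : Matrix n n 𝕜, Bᴴ = B ∧ B * B = A :=
    ⟨CFC.sqrt A, (CFC.sqrt_nonneg A).isSelfAdjoint, CFC.sqrt_mul_sqrt_self A hA.nonneg⟩
  refine ⟨fun j ↦ WithLp.toLp 2 fun i ↦ B i j, ?_⟩
  have hcol : Matrix.of (fun i j ↦
      (EuclideanSpace.basisFun n 𝕜).repr (WithLp.toLp 2 fun i ↦ B i j) i) = B := by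
    ext; simp
  rw [gram_eq_conjTranspose_mul (EuclideanSpace.basisFun n 𝕜)]
  simp only [hcol, hB, hBB]

namespace IsPositiveDefiniteFn

variable {G : Type*} [AddCommGroup G] {η : G → ℂ}

theorem posSemidef (hη : IsPositiveDefiniteFn η) {N : ℕ} (x : Fin N → G) :
    (Matrix.of fun i j ↦ η (x i - x j)).PosSemidef := by
  rw [← Matrix.isPositive_toEuclideanLin_iff, LinearMap.isPositive_iff_complex]
  intro c
  -- The quadratic form at `c` is the conjugate of the defining sum at `star c`.
  obtain ⟨r, hr, hsum⟩ := hη N x (star c.ofLp)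
  have hc : ⟪(Matrix.of fun i j ↦ η (x i - x j)).toEuclideanLin c, c⟫_ℂ = r := by
    rw [← Complex.conj_ofReal, ← hsum]
    simp only [EuclideanSpace.inner_eq_star_dotProduct, dotProduct, Matrix.ofLp_toLpLin,
      Matrix.toLin'_apply, Pi.star_apply, Matrix.mulVec, Matrix.of_apply, star_sum, star_mul',
      RCLike.star_def, Finset.mul_sum, RingHomCompTriple.comp_apply, RingHom.id_apply, map_sum,
      map_mul]
    exact Finset.sum_congr rfl fun _ _ ↦ Finset.sum_congr rfl fun _ _ ↦ by ring
  simp [hc, hr]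

theorem exists_inner_eq (hη : IsPositiveDefiniteFn η) {N : ℕ} (x : Fin N → G) :
    ∃ v : Fin N → EuclideanSpace ℂ (Fin N), ∀ i j, ⟪v i, v j⟫_ℂ = η (x i - x j) := by
  obtain ⟨v, hv⟩ := (hη.posSemidef x).exists_gram_eq
  exact ⟨v, fun i j ↦ by simpa using congrFun (congrFun hv i) j⟩

theorem exists_unit_inner_eq_div (hη : IsPositiveDefiniteFn η) (h0 : 0 < (η 0).re) {N : ℕ}
    (x : Fin N → G) : ∃ p : Fin N → EuclideanSpace ℂ (Fin N),
      (∀ i, ‖p i‖ = 1) ∧ ∀ i j, ⟪p i, p j⟫_ℂ = η (x i - x j) / η 0 := by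
  obtain ⟨v, hv⟩ := hη.exists_inner_eq x
  set c := √(η 0).re
  have hc : 0 < c := Real.sqrt_pos.mpr h0
  have hsq (i : Fin N) : ⟪v i, v i⟫_ℂ = η 0 := by rw [hv, sub_self]
  have hnorm (i : Fin N) : ‖v i‖ = c := by
    rw [← Real.sqrt_sq (norm_nonneg _), ← inner_self_eq_norm_sq (𝕜 := ℂ), hsq,
      RCLike.re_to_complex]
  refine ⟨fun i ↦ (c⁻¹ : ℂ) • v i, fun i ↦ ?_, fun i j ↦ ?_⟩
  · rw [norm_smul, hnorm]
    simp [abs_of_pos hc, hc.ne']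
  · rw [inner_smul_left, inner_smul_right, hv, ← hsq i, inner_self_eq_norm_sq_to_K, hnorm]
    simp only [map_inv₀, Complex.conj_ofReal, Complex.coe_algebraMap]
    field_simp

end IsPositiveDefiniteFn

/-- For a positive definite `η` with `η(0) > 0`, `ρ(s,t) = |1 − η(s−t)/η(0)|^{1/2}` is a
translation-invariant pseudometric on `G`, bounded by `√2`. -/
theorem acRho_pseudometric {G : Type*} [AddCommGroup G] (η : G → ℂ)
    (hpd : IsPositiveDefiniteFn η) (hη0 : 0 < (η 0).re) :
    ∀ r s t u : G,
      acRho η s s = 0 ∧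
      acRho η s t = acRho η t s ∧
      acRho η s u ≤ acRho η s t + acRho η t u ∧
      acRho η (s + r) (t + r) = acRho η s t ∧
      acRho η s t ≤ Real.sqrt 2 := by
  intro r s t u
  obtain ⟨p, hp, hpη⟩ := hpd.exists_unit_inner_eq_div hη0 ![s, t, u]
  have hρ (i j : Fin 3) : acRho η (![s, t, u] i) (![s, t, u] j) = √‖1 - ⟪p i, p j⟫_ℂ‖ := by
    rw [acRho, hpη]
  have hst : acRho η s t = √‖1 - ⟪p 0, p 1⟫_ℂ‖ := hρ 0 1
  have hts : acRho η t s = √‖1 - ⟪p 1, p 0⟫_ℂ‖ := hρ 1 0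
  have htu : acRho η t u = √‖1 - ⟪p 1, p 2⟫_ℂ‖ := hρ 1 2
  have hsu : acRho η s u = √‖1 - ⟪p 0, p 2⟫_ℂ‖ := hρ 0 2
  have hne : η 0 ≠ 0 := fun h ↦ hη0.ne' (by simp [h])
  refine ⟨by simp [acRho, div_self hne], ?_, ?_, ?_, ?_⟩
  · rw [hst, hts, norm_one_sub_inner_comm]
  · rw [hsu, hst, htu]
    exact sqrt_norm_one_sub_inner_le_add (hp 0) (hp 1) (hp 2)
  · simp [acRho]
  · rw [hst]
    exact Real.sqrt_le_sqrt (norm_one_sub_inner_le_two (hp 0) (hp 1))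
end

section
/- Let G be a locally compact Hausdorff abelian topological group and η : G → ℂ positive definite with η(0) > 0. Assume that Δ := {z ∈ G : η(z) ≠ 0} is closed and discrete in G and that P_ε is relatively dense in G for every ε > 0. Then for every ε with 0 < ε < 1, the set P_ε is totally bounded with respect to the pseudometric ρ: for every δ > 0 there exists a finite set F ⊆ G such that P_ε ⊆ P_δ + F. -/
open scoped Pointwise

/-- A subset `P` of a topological abelian group is relatively dense if `P + K = G`
for some compact `K`. -/
def RelativelyDense {G : Type*} [AddCommGroup G] [TopologicalSpace G] (P : Set G) : Prop :=
  ∃ K : Set G, IsCompact K ∧ P + K = Set.univ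

/-!
An `ε`-almost period `t` satisfies `|η(t)| > (1 - ε²) η(0)`, and by Krein's inequality
`|η(x) - η(y)|² ≤ 2 η(0) Re (η(0) - η(x - y))` the function `η / η(0)` is `√2`-Lipschitz for `ρ`.
Hence `η(t - p) ≠ 0` whenever `p` is a `δ`-almost period with `√2 δ ≤ 1 - ε²`. Writing
`t = p + k` with `k` in a compact set `K` such that `P_δ + K = G`, the translation `k` lies in
`Δ ∩ K`, which is finite because it is compact and discrete.
-/

namespace IsPositiveDefiniteFn

variable {G : Type*} [AddCommGroup G] {η : G → ℂ}

theorem apply_zero_eq_re (hpd : IsPositiveDefiniteFn η) : η 0 = ((η 0).re : ℂ) := by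
  obtain ⟨r, -, h⟩ := hpd 1 (fun _ => 0) (fun _ => 1)
  simp only [Fin.sum_univ_one, sub_self, map_one, mul_one, one_mul] at h
  simp [h]

theorem apply_neg (hpd : IsPositiveDefiniteFn η) (x : G) : η (-x) = starRingEnd ℂ (η x) := by
  obtain ⟨r₁, -, h₁⟩ := hpd 2 ![0, x] ![1, 1]
  obtain ⟨r₂, -, h₂⟩ := hpd 2 ![0, x] ![1, Complex.I]
  simp only [Fin.sum_univ_two, Matrix.cons_val_zero, Matrix.cons_val_one, sub_self, zero_sub,
    sub_zero, map_one, one_mul, mul_one, Complex.conj_I] at h₁ h₂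
  have him₁ := congrArg Complex.im h₁
  have him₂ := congrArg Complex.im h₂
  rw [hpd.apply_zero_eq_re] at him₁ him₂
  simp [Complex.mul_im] at him₁ him₂
  apply Complex.ext <;> simp <;> linarith

/-- The form of `η` evaluated at the points `0, x, y` with weights `μ, l, -l`. -/
theorem three_point_nonneg (hpd : IsPositiveDefiniteFn η) (x y : G) (μ : ℝ) (l : ℂ) :
    0 ≤ μ ^ 2 * (η 0).re + 2 * Complex.normSq l * ((η 0).re - (η (x - y)).re)
      + 2 * μ * (l * (η x - η y)).re := by
  obtain ⟨r, hr, h⟩ := hpd 3 ![0, x, y] ![(μ : ℂ), l, -l]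
  have hyx : η (y - x) = starRingEnd ℂ (η (x - y)) := by rw [← neg_sub x y, hpd.apply_neg]
  simp only [Fin.sum_univ_three, Matrix.cons_val_zero, Matrix.cons_val_one, Matrix.cons_val_two,
    Matrix.head_cons, Matrix.tail_cons, sub_self, zero_sub, sub_zero, map_neg] at h
  rw [hpd.apply_neg x, hpd.apply_neg y, hyx, hpd.apply_zero_eq_re] at h
  have hre := congrArg Complex.re h
  simp only [Complex.add_re, Complex.mul_re, Complex.sub_re, Complex.sub_im, Complex.mul_im,
    Complex.conj_re, Complex.conj_im, Complex.ofReal_re, Complex.ofReal_im, Complex.neg_re,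
    Complex.neg_im, Complex.normSq_apply] at hre ⊢
  nlinarith

/-- Krein's inequality. -/
theorem norm_sub_sq_le (hpd : IsPositiveDefiniteFn η) (hη0 : 0 < (η 0).re) (x y : G) :
    ‖η x - η y‖ ^ 2 ≤ 2 * (η 0).re * ((η 0).re - (η (x - y)).re) := by
  set A := (η 0).re
  set D := A - (η (x - y)).re
  set B := η x - η y
  have hD : 0 ≤ D := by simpa [D, sub_nonneg] using hpd.three_point_nonneg x y 0 1
  -- the weights `μ = |B|² / A`, `l = -conj B` minimise the form
  have h := hpd.three_point_nonneg x y (‖B‖ ^ 2 / A) (-starRingEnd ℂ B)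
  have hl : Complex.normSq (-starRingEnd ℂ B) = ‖B‖ ^ 2 := by
    simp [Complex.normSq_eq_norm_sq]
  have hlB : (-starRingEnd ℂ B * B).re = -‖B‖ ^ 2 := by
    rw [neg_mul, mul_comm, Complex.mul_conj, Complex.normSq_eq_norm_sq]
    norm_cast
  rw [hl, hlB] at h
  have hprod : 0 ≤ ‖B‖ ^ 2 * (2 * A * D - ‖B‖ ^ 2) := by
    have : ‖B‖ ^ 2 * (2 * A * D - ‖B‖ ^ 2) =
        A * ((‖B‖ ^ 2 / A) ^ 2 * A + 2 * ‖B‖ ^ 2 * D + 2 * (‖B‖ ^ 2 / A) * -‖B‖ ^ 2) := by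
      field_simp
      ring
    rw [this]
    positivity
  rcases (sq_nonneg ‖B‖).eq_or_lt with hB | hB
  · rw [← hB]
    positivity
  · linarith [nonneg_of_mul_nonneg_right hprod hB]

theorem norm_div_sub_div_le (hpd : IsPositiveDefiniteFn η) (hη0 : 0 < (η 0).re) (x y : G) :
    ‖η x / η 0 - η y / η 0‖ ≤ √2 * acRho η x y := by
  set A := (η 0).re
  have hkrein := hpd.norm_sub_sq_le hη0 x y
  have hA : η 0 = A := hpd.apply_zero_eq_re
  have hre : A - (η (x - y)).re = A * (1 - η (x - y) / A).re := by
    rw [Complex.sub_re, Complex.div_ofReal_re]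
    field_simp
    simp
  rw [acRho, ← Real.sqrt_mul zero_le_two, hA, ← sub_div, norm_div, Complex.norm_real,
    Real.norm_of_nonneg hη0.le, Real.le_sqrt (by positivity) (by positivity), div_pow, div_le_iff₀ (by positivity)]
  calc ‖η x - η y‖ ^ 2 ≤ 2 * A * (A * (1 - η (x - y) / A).re) := hre ▸ hkrein
    _ ≤ 2 * A * (A * ‖1 - η (x - y) / A‖) := by gcongr; exact Complex.re_le_norm _
    _ = 2 * ‖1 - η (x - y) / A‖ * A ^ 2 := by ring

end IsPositiveDefiniteFn

section AlmostPeriods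

variable {G : Type*} [AddCommGroup G] {η : G → ℂ}

theorem almostPeriods_mono : Monotone (almostPeriods η) :=
  fun _ _ hεδ _ ht => lt_of_lt_of_le ht hεδ

theorem one_sub_acRho_sq_le_norm (t : G) : 1 - acRho η t 0 ^ 2 ≤ ‖η t / η 0‖ := by
  rw [acRho, Real.sq_sqrt (norm_nonneg _), sub_zero]
  have := norm_sub_norm_le (1 : ℂ) (η t / η 0)
  rw [norm_one] at this
  linarith

theorem IsPositiveDefiniteFn.apply_sub_ne_zero (hpd : IsPositiveDefiniteFn η)
    (hη0 : 0 < (η 0).re) {ε δ : ℝ} (hεδ : √2 * δ ≤ 1 - ε ^ 2) {t p : G}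
    (ht : t ∈ almostPeriods η ε) (hp : p ∈ almostPeriods η δ) : η (t - p) ≠ 0 := by
  intro hzero
  have hρt : acRho η t 0 ^ 2 < ε ^ 2 := pow_lt_pow_left₀ ht (Real.sqrt_nonneg _) two_ne_zero
  have hlip : ‖η t / η 0‖ ≤ √2 * acRho η p 0 := by
    simpa [hzero, acRho] using hpd.norm_div_sub_div_le hη0 t (t - p)
  have hp' : √2 * acRho η p 0 < √2 * δ := mul_lt_mul_of_pos_left hp (by positivity)
  linarith [one_sub_acRho_sq_le_norm (η := η) t]

theorem almostPeriods_subset_add_support_inter (hpd : IsPositiveDefiniteFn η)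
    (hη0 : 0 < (η 0).re) {ε δ : ℝ} (hεδ : √2 * δ ≤ 1 - ε ^ 2) {K : Set G}
    (hK : almostPeriods η δ + K = Set.univ) :
    almostPeriods η ε ⊆ almostPeriods η δ + ({z | η z ≠ 0} ∩ K) := by
  intro t ht
  obtain ⟨p, hp, k, hk, rfl⟩ : t ∈ almostPeriods η δ + K := hK ▸ Set.mem_univ t
  refine ⟨p, hp, k, ⟨?_, hk⟩, rfl⟩
  simpa using hpd.apply_sub_ne_zero hη0 hεδ ht hp

end AlmostPeriods

theorem almostPeriods_totallyBounded_general {G : Type*} [AddCommGroup G] [TopologicalSpace G]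
    (η : G → ℂ)
    (hpd : IsPositiveDefiniteFn η) (hη0 : 0 < (η 0).re)
    (hclosed : IsClosed {z : G | η z ≠ 0}) (hdiscrete : DiscreteTopology {z : G | η z ≠ 0})
    (hdense : ∀ ε : ℝ, 0 < ε → RelativelyDense (almostPeriods η ε)) :
    ∀ ε : ℝ, 0 < ε → ε < 1 → ∀ δ : ℝ, 0 < δ →
      ∃ F : Finset G, almostPeriods η ε ⊆ almostPeriods η δ + (F : Set G) := by
  intro ε hε hε1 δ hδ
  set δ' := min δ ((1 - ε ^ 2) / 2)
  have hδ' : 0 < δ' := lt_min hδ (by nlinarith)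
  have hεδ' : √2 * δ' ≤ 1 - ε ^ 2 := by
    have : √2 ≤ 2 := by rw [Real.sqrt_le_left zero_le_two]; norm_num
    nlinarith [min_le_right δ ((1 - ε ^ 2) / 2), Real.sqrt_nonneg 2]
  obtain ⟨K, hK, hPK⟩ := hdense δ' hδ'
  have hfin : ({z : G | η z ≠ 0} ∩ K).Finite :=
    (hK.inter_left hclosed).finite ((IsDiscrete.mk hdiscrete).mono Set.inter_subset_left)
  refine ⟨hfin.toFinset, ?_⟩
  rw [hfin.coe_toFinset]
  exact (almostPeriods_subset_add_support_inter hpd hη0 hεδ' hPK).trans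
    (Set.add_subset_add_right (almostPeriods_mono (min_le_left _ _)))

/-- If the support `Δ` of a positive definite `η` (with `η(0) > 0`) is closed and discrete
and all `P_ε` are relatively dense, then for `0 < ε < 1` the set `P_ε` is totally bounded
in the autocorrelation pseudometric: it is covered by finitely many translates of any `P_δ`. -/
theorem almostPeriods_totallyBounded {G : Type*} [AddCommGroup G] [TopologicalSpace G]
    [IsTopologicalAddGroup G] [LocallyCompactSpace G] [T2Space G] (η : G → ℂ)
    (hpd : IsPositiveDefiniteFn η) (hη0 : 0 < (η 0).re)
    (hclosed : IsClosed {z : G | η z ≠ 0}) (hdiscrete : DiscreteTopology {z : G | η z ≠ 0})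
    (hdense : ∀ ε : ℝ, 0 < ε → RelativelyDense (almostPeriods η ε)) :
    ∀ ε : ℝ, 0 < ε → ε < 1 → ∀ δ : ℝ, 0 < δ →
      ∃ F : Finset G, almostPeriods η ε ⊆ almostPeriods η δ + (F : Set G) :=
  almostPeriods_totallyBounded_general η hpd hη0 hclosed hdiscrete hdense
end

section
/- In the completion setup, the group H = UniformSpace.Completion L (the Hausdorff completion of the subgroup L generated by Δ, with respect to the autocorrelation pseudometric ρ) is a locally compact topological space. -/
open scoped Pointwise

/-! Let `Δ` be the support of `η`. Points of `ρ`-distance `< 1` from `0` lie in `Δ`. Given `ε`,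
relative density writes each `t ∈ L` with `ρ(t, 0) < 1/2` as `t = p + k`, `p` an `ε`-almost period
and `k` in a fixed compact `K`; then `p ∈ Δ`, and `k = t - p ∈ Δ` as `ρ(t, p) < 1/2 + ε`. As `Δ` is
closed and discrete, `Δ ∩ K` is finite, and it is an `ε`-net of the `1/2`-ball (`ρ(t, k) = ρ(p, 0)`).
By translation invariance every `1/2`-ball of `L` is totally bounded, so the closures of their
images in the completion are compact neighbourhoods. -/

open Metric
open UniformSpace (Completion)

theorem UniformSpace.Completion.locallyCompactSpace_of_totallyBounded_ball {α : Type*}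
    [PseudoMetricSpace α] {r : ℝ} (hr : 0 < r) (h : ∀ x : α, TotallyBounded (Metric.ball x r)) :
    LocallyCompactSpace (Completion α) := by
  have : WeaklyLocallyCompactSpace (Completion α) := by
    refine ⟨fun y => ?_⟩
    obtain ⟨_, ⟨x, rfl⟩, hyx⟩ :=
      Metric.mem_closure_iff.1 (Completion.denseRange_coe y) (r / 2) (half_pos hr)
    refine ⟨closure ((↑) '' Metric.ball x r),
      ((h x).image (Completion.uniformContinuous_coe α)).closure.isCompact_of_isClosed
        isClosed_closure, ?_⟩
    have hball : Metric.ball (x : Completion α) r ⊆ closure ((↑) '' Metric.ball x r) := by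
      rw [← (Completion.coe_isometry (α := α)).preimage_ball, Set.image_preimage_eq_inter_range]
      exact Completion.denseRange_coe.open_subset_closure_inter
        (Metric.isOpen_ball (x := (x : Completion α)))
    refine Filter.mem_of_superset (Metric.ball_mem_nhds y (half_pos hr))
      ((Metric.ball_subset_ball' ?_).trans hball)
    linarith
  infer_instance

theorem totallyBounded_ball_of_totallyBounded_ball_zero {E : Type*} [AddGroup E]
    [PseudoMetricSpace E] [IsIsometricVAdd E E] {r : ℝ} (h : TotallyBounded (ball (0 : E) r))
    (x : E) : TotallyBounded (ball x r) := by
  simpa using h.image (isometry_vadd E x).uniformContinuous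

section Autocorrelation

variable {G : Type*} [AddCommGroup G] {η : G → ℂ}

theorem acRho_sub_zero (s t : G) : acRho η (s - t) 0 = acRho η s t := by
  simp [acRho]

theorem ne_zero_of_acRho_lt_one {z : G} (h : acRho η z 0 < 1) : η z ≠ 0 := by
  contrapose! h
  simp [acRho, h]

theorem isIsometricVAdd_of_dist_eq_acRho (L : AddSubgroup G) [PseudoMetricSpace L]
    (hdist : ∀ s t : L, dist s t = acRho η s t) : IsIsometricVAdd L L :=
  ⟨fun c => Isometry.of_dist_eq fun s t => by simp [hdist, acRho]⟩

theorem totallyBounded_ball_zero_of_relativelyDense [TopologicalSpace G]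
    (hclosed : IsClosed {z : G | η z ≠ 0}) (hdiscrete : DiscreteTopology {z : G | η z ≠ 0})
    (hdense : ∀ ε : ℝ, 0 < ε → RelativelyDense (almostPeriods η ε))
    (L : AddSubgroup G) (hL : {z : G | η z ≠ 0} ⊆ L) [PseudoMetricSpace L]
    (hdist : ∀ s t : L, dist s t = acRho η s t) :
    TotallyBounded (ball (0 : L) 2⁻¹) := by
  have hdist_sub (s t : L) : dist s t = acRho η ((s : G) - t) 0 := by
    rw [hdist, acRho_sub_zero]
  rw [Metric.totallyBounded_iff]
  intro ε hε
  set δ := min ε 2⁻¹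
  obtain ⟨K, hK, hcover⟩ := hdense δ (by positivity)
  have hfin : ({z : G | η z ≠ 0} ∩ K).Finite :=
    (hK.inter_left hclosed).finite
      ((isDiscrete_iff_discreteTopology.2 hdiscrete).mono Set.inter_subset_left)
  refine ⟨(↑) ⁻¹' ({z : G | η z ≠ 0} ∩ K), hfin.preimage Subtype.val_injective.injOn,
    fun t ht => ?_⟩
  obtain ⟨p, hp, k, hk, hpk⟩ : (t : G) ∈ almostPeriods η δ + K := hcover ▸ trivial
  have hpδ : acRho η p 0 < δ := hp
  have hp_mem : p ∈ L :=
    hL (ne_zero_of_acRho_lt_one (hpδ.trans_le ((min_le_right _ _).trans (by norm_num))))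
  set p' : L := ⟨p, hp_mem⟩
  have hp'_dist : dist p' 0 < δ := by simpa [hdist_sub, p'] using hpδ
  have hk_eq : ((t - p' : L) : G) = k := by simp [p', ← hpk]
  refine Set.mem_iUnion₂.2 ⟨t - p', ⟨ne_zero_of_acRho_lt_one ?_, hk_eq ▸ hk⟩, ?_⟩
  · calc acRho η ((t - p' : L) : G) 0 = dist t p' := by rw [hdist_sub]; simp
      _ ≤ dist t 0 + dist p' 0 := dist_triangle_right _ _ _
      _ < 2⁻¹ + 2⁻¹ := add_lt_add (mem_ball.1 ht) (hp'_dist.trans_le (min_le_right _ _))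
      _ = 1 := by norm_num
  · rw [mem_ball, hdist_sub]
    simpa [p'] using hpδ.trans_le (min_le_left _ _)

end Autocorrelation

theorem completion_locallyCompact_general {G : Type*} [AddCommGroup G] [TopologicalSpace G]
    (η : G → ℂ)
    (hclosed : IsClosed {z : G | η z ≠ 0}) (hdiscrete : DiscreteTopology {z : G | η z ≠ 0})
    (hdense : ∀ ε : ℝ, 0 < ε → RelativelyDense (almostPeriods η ε))
    [PseudoMetricSpace ↥(AddSubgroup.closure {z : G | η z ≠ 0})]
    (hdist : ∀ s t : ↥(AddSubgroup.closure {z : G | η z ≠ 0}),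
      dist s t = acRho η (s : G) (t : G)) :
    LocallyCompactSpace
      (UniformSpace.Completion ↥(AddSubgroup.closure {z : G | η z ≠ 0})) := by
  have := isIsometricVAdd_of_dist_eq_acRho _ hdist
  have hball_zero := totallyBounded_ball_zero_of_relativelyDense hclosed hdiscrete hdense _
    AddSubgroup.subset_closure hdist
  exact Completion.locallyCompactSpace_of_totallyBounded_ball (by norm_num)
    (totallyBounded_ball_of_totallyBounded_ball_zero hball_zero)

/-- In the completion setup for a pure point autocorrelation, the Hausdorff completion `H`
of the subgroup `L` generated by the support of `η`, taken with respect to the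
autocorrelation pseudometric, is locally compact. -/
theorem completion_locallyCompact {G : Type*} [AddCommGroup G] [TopologicalSpace G]
    [IsTopologicalAddGroup G] [LocallyCompactSpace G] [T2Space G] [SigmaCompactSpace G]
    (η : G → ℂ) (hpd : IsPositiveDefiniteFn η) (hη0 : 0 < (η 0).re)
    (hclosed : IsClosed {z : G | η z ≠ 0}) (hdiscrete : DiscreteTopology {z : G | η z ≠ 0})
    (hdense : ∀ ε : ℝ, 0 < ε → RelativelyDense (almostPeriods η ε))
    [PseudoMetricSpace ↥(AddSubgroup.closure {z : G | η z ≠ 0})]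
    (hdist : ∀ s t : ↥(AddSubgroup.closure {z : G | η z ≠ 0}),
      dist s t = acRho η (s : G) (t : G)) :
    LocallyCompactSpace
      (UniformSpace.Completion ↥(AddSubgroup.closure {z : G | η z ≠ 0})) :=
  completion_locallyCompact_general η hclosed hdiscrete hdense hdist
end

section
/- Let G and J be locally compact Hausdorff abelian topological groups and M̃ a discrete subgroup of G × J such that π_G restricted to M̃ is injective. If W ⊆ J has compact closure, then ⋏(W) := {π_G(y) : y ∈ M̃, π_J(y) ∈ W} is uniformly discrete in G: there exists an open neighbourhood U of 0 in G such that (x + U) ∩ ⋏(W) = {x} for every x ∈ ⋏(W). -/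
open scoped Pointwise
open Topology

/-!
Differences of points of `⋏(W)` are again projections of points of `M`, now with internal
coordinates in the compact set `closure W - closure W`. A discrete subgroup is closed, so only
finitely many points of `M` lie in `C ×ˢ (closure W - closure W)` for a compact neighbourhood `C`
of `0`; removing the finitely many nonzero differences from `interior C` leaves the required
neighbourhood `U`.
-/

/-- The set `⋏(W)`. -/
def cutProjectSet {G J : Type*} [AddGroup G] [AddGroup J] (M : AddSubgroup (G × J))
    (W : Set J) : Set G :=
  {g | ∃ y ∈ M, Prod.fst y = g ∧ Prod.snd y ∈ W}

def IsUniformlyDiscrete {G : Type*} [AddGroup G] [TopologicalSpace G] (P : Set G) : Prop :=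
  ∃ U : Set G, IsOpen U ∧ (0 : G) ∈ U ∧ ∀ x ∈ P, ({x} + U) ∩ P = {x}

theorem isUniformlyDiscrete_of_finite_sub_inter {G : Type*} [AddCommGroup G] [TopologicalSpace G]
    [T1Space G] {P C : Set G} (hC : C ∈ 𝓝 0) (hfin : ((P - P) ∩ C).Finite) :
    IsUniformlyDiscrete P := by
  set F := ((P - P) ∩ C) \ {0}
  have h0 : (0 : G) ∈ interior C ∩ Fᶜ := ⟨mem_interior_iff_mem_nhds.mpr hC, fun h => h.2 rfl⟩
  refine ⟨interior C ∩ Fᶜ, isOpen_interior.inter hfin.sdiff.isClosed.isOpen_compl, h0, ?_⟩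
  intro x hx
  refine Set.Subset.antisymm ?_ (Set.singleton_subset_iff.mpr ⟨⟨x, rfl, 0, h0, add_zero x⟩, hx⟩)
  rintro _ ⟨⟨x', hx', u, ⟨huC, huF⟩, rfl⟩, hxu⟩
  rw [Set.mem_singleton_iff.mp hx'] at hxu ⊢
  have hdiff : u ∈ P - P := ⟨x + u, hxu, x, hx, add_sub_cancel_left x u⟩
  by_cases hu : u = 0
  · simp [hu]
  · exact absurd ⟨⟨hdiff, interior_subset huC⟩, hu⟩ huF

theorem AddSubgroup.finite_inter_of_isCompact {G : Type*} [AddGroup G] [TopologicalSpace G]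
    [IsTopologicalAddGroup G] [T2Space G] (H : AddSubgroup G) [DiscreteTopology H] {K : Set G}
    (hK : IsCompact K) : ((H : Set G) ∩ K).Finite :=
  (hK.inter_left AddSubgroup.isClosed_of_discrete).finite
    (isDiscrete_iff_discreteTopology.mpr (DiscreteTopology.of_subset ‹_› Set.inter_subset_left))

section CutProjectSet

variable {G J : Type*} [AddGroup G] [AddGroup J] (M : AddSubgroup (G × J))

theorem cutProjectSet_mono {W W' : Set J} (h : W ⊆ W') : cutProjectSet M W ⊆ cutProjectSet M W' :=
  fun _ ⟨y, hyM, hy1, hy2⟩ => ⟨y, hyM, hy1, h hy2⟩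

theorem cutProjectSet_sub_subset (W : Set J) :
    cutProjectSet M W - cutProjectSet M W ⊆ cutProjectSet M (W - W) := by
  rintro _ ⟨_, ⟨y, hyM, rfl, hyW⟩, _, ⟨y', hy'M, rfl, hy'W⟩, rfl⟩
  exact ⟨y - y', sub_mem hyM hy'M, rfl, y.2, hyW, y'.2, hy'W, rfl⟩

theorem cutProjectSet_inter_eq_image (K : Set J) (C : Set G) :
    cutProjectSet M K ∩ C = Prod.fst '' ((M : Set (G × J)) ∩ C ×ˢ K) := by
  ext g
  constructor
  · rintro ⟨⟨y, hyM, rfl, hyK⟩, hyC⟩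
    exact ⟨y, ⟨hyM, hyC, hyK⟩, rfl⟩
  · rintro ⟨y, ⟨hyM, hyC, hyK⟩, rfl⟩
    exact ⟨⟨y, hyM, rfl, hyK⟩, hyC⟩

theorem finite_cutProjectSet_inter_of_isCompact [TopologicalSpace G] [IsTopologicalAddGroup G]
    [T2Space G] [TopologicalSpace J] [IsTopologicalAddGroup J] [T2Space J] [DiscreteTopology M]
    {K : Set J} {C : Set G} (hK : IsCompact K) (hC : IsCompact C) :
    (cutProjectSet M K ∩ C).Finite := by
  rw [cutProjectSet_inter_eq_image]
  exact (M.finite_inter_of_isCompact (hC.prod hK)).image Prod.fst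

end CutProjectSet

theorem cutProject_uniformly_discrete_general {G J : Type*}
    [AddCommGroup G] [TopologicalSpace G] [IsTopologicalAddGroup G] [LocallyCompactSpace G]
    [T2Space G]
    [AddCommGroup J] [TopologicalSpace J] [IsTopologicalAddGroup J]
    [T2Space J]
    (M : AddSubgroup (G × J)) (hdisc : DiscreteTopology ↥M)
    (W : Set J) (hW : IsCompact (closure W)) :
    ∃ U : Set G, IsOpen U ∧ (0 : G) ∈ U ∧
      ∀ x ∈ {g : G | ∃ y ∈ M, Prod.fst y = g ∧ Prod.snd y ∈ W},
        ({x} + U) ∩ {g : G | ∃ y ∈ M, Prod.fst y = g ∧ Prod.snd y ∈ W} = {x} := by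
  show IsUniformlyDiscrete (cutProjectSet M W)
  obtain ⟨C, hC, hC0⟩ := exists_compact_mem_nhds (0 : G)
  have hdiff : cutProjectSet M W - cutProjectSet M W ⊆ cutProjectSet M (closure W - closure W) :=
    (cutProjectSet_sub_subset M W).trans
      (cutProjectSet_mono M (Set.sub_subset_sub subset_closure subset_closure))
  exact isUniformlyDiscrete_of_finite_sub_inter hC0
    ((finite_cutProjectSet_inter_of_isCompact M (by simpa only [sub_eq_add_neg] using hW.add hW.neg) hC).subset
      (Set.inter_subset_inter_left C hdiff))

/-- If `M̃` is a discrete subgroup of `G × J` on which the first projection is injective and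
`W ⊆ J` has compact closure, then the projection set
`⋏(W) = {π_G(y) : y ∈ M̃, π_J(y) ∈ W}` is uniformly discrete in `G`. -/
theorem cutProject_uniformly_discrete {G J : Type*}
    [AddCommGroup G] [TopologicalSpace G] [IsTopologicalAddGroup G] [LocallyCompactSpace G]
    [T2Space G]
    [AddCommGroup J] [TopologicalSpace J] [IsTopologicalAddGroup J] [LocallyCompactSpace J]
    [T2Space J]
    (M : AddSubgroup (G × J)) (hdisc : DiscreteTopology ↥M)
    (hinj : Set.InjOn Prod.fst (M : Set (G × J)))
    (W : Set J) (hW : IsCompact (closure W)) :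
    ∃ U : Set G, IsOpen U ∧ (0 : G) ∈ U ∧
      ∀ x ∈ {g : G | ∃ y ∈ M, Prod.fst y = g ∧ Prod.snd y ∈ W},
        ({x} + U) ∩ {g : G | ∃ y ∈ M, Prod.fst y = g ∧ Prod.snd y ∈ W} = {x} :=
  cutProject_uniformly_discrete_general M hdisc W hW
end

section
/- Let n ∈ ℕ with n ≥ 2. Then the family over all primes p of the real numbers 1 + 1/(p^n − 2) is multipliable, and for every ε > 0 there exists an integer m ≥ 1 such that for every nonzero t ∈ ℤ^n all of whose coordinates are divisible by m, one has ∏_{p prime, p ∣ cont(t)} (1 + 1/(p^n − 2)) > (1 − ε²) · ∏'_{p prime} (1 + 1/(p^n − 2)), where the left product runs over the (finitely many) prime divisors of cont(t) and the right product is the convergent infinite product over all primes. -/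
/-- For `n ≥ 2` the family `1 + 1/(p^n - 2)` over the primes is multipliable, and for every
`ε > 0` there is `m ≥ 1` such that every nonzero `t ∈ ℤ^n` with all coordinates divisible by `m`
satisfies `∏_{p ∣ cont(t)} (1 + 1/(p^n − 2)) > (1 − ε²) ∏'_{p prime} (1 + 1/(p^n − 2))`,
where `cont(t)` is the gcd of the absolute values of the coordinates of `t`. -/
theorem visiblePoints_almostPeriods (n : ℕ) (hn : 2 ≤ n) :
    Multipliable (fun p : Nat.Primes => (1 + 1 / ((p : ℝ) ^ n - 2))) ∧
    ∀ ε : ℝ, 0 < ε → ∃ m : ℕ, 1 ≤ m ∧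
      ∀ t : Fin n → ℤ, t ≠ 0 → (∀ i, (m : ℤ) ∣ t i) →
        (1 - ε ^ 2) * ∏' p : Nat.Primes, (1 + 1 / ((p : ℝ) ^ n - 2)) <
          ∏ p ∈ (Finset.univ.gcd fun i => (t i).natAbs).primeFactors,
            (1 + 1 / ((p : ℝ) ^ n - 2)) := by
  set F : ℕ → ℝ := fun q => 1 + 1 / ((q : ℝ) ^ n - 2) with hF
  have key : ∀ q : ℕ, q.Prime → (2 : ℝ) ≤ (q : ℝ) ^ n - 2 := by
    intro q hq
    have h2 : (2 : ℝ) ≤ (q : ℝ) := by exact_mod_cast hq.two_le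
    have h4 : (4 : ℝ) ≤ (q : ℝ) ^ n := by
      calc (4 : ℝ) = 2 ^ 2 := by norm_num
        _ ≤ (q : ℝ) ^ 2 := by nlinarith
        _ ≤ (q : ℝ) ^ n := pow_le_pow_right₀ (by linarith) hn
    linarith
  have hone : ∀ q : ℕ, q.Prime → (1 : ℝ) ≤ F q := by
    intro q hq
    have hk := key q hq
    have : (0 : ℝ) ≤ 1 / ((q : ℝ) ^ n - 2) := by positivity
    simp only [hF]; linarith
  have hsum : Summable (fun p : Nat.Primes => Real.log (F p)) := by
    have h1 : Summable (fun k : ℕ => 2 * (1 / (k : ℝ) ^ 2)) :=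
      (Real.summable_one_div_nat_pow.mpr one_lt_two).mul_left 2
    have h2 : Summable (fun p : Nat.Primes => 2 * (1 / ((p : ℝ)) ^ 2)) :=
      h1.comp_injective Nat.Primes.coe_nat_injective
    refine Summable.of_nonneg_of_le (fun p => Real.log_nonneg (hone p p.2)) (fun p => ?_) h2
    have hk := key (p : ℕ) (p.2)
    have hp2 : (2 : ℝ) ≤ (p : ℝ) := by exact_mod_cast p.2.two_le
    have hpn : ((p : ℝ)) ^ 2 ≤ (p : ℝ) ^ n := pow_le_pow_right₀ (by linarith) hn
    have hineq : 1 / ((p : ℝ) ^ n - 2) ≤ 2 * (1 / ((p : ℝ)) ^ 2) := by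
      rw [div_le_iff₀ (by linarith)]
      have hq2 : (4 : ℝ) ≤ ((p : ℝ)) ^ 2 := by nlinarith
      rw [mul_one_div, div_mul_eq_mul_div, le_div_iff₀ (by positivity)]
      nlinarith
    calc Real.log (F p) ≤ F p - 1 := Real.log_le_sub_one_of_pos (by linarith [hone p p.2])
      _ = 1 / ((p : ℝ) ^ n - 2) := by simp [hF]
      _ ≤ 2 * (1 / ((p : ℝ)) ^ 2) := hineq
  have hProd : HasProd (fun p : Nat.Primes => F p)
      (Real.exp (∑' p : Nat.Primes, Real.log (F p))) := by
    have hfun : (Real.exp ∘ fun p : Nat.Primes => Real.log (F p)) =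
        fun p : Nat.Primes => F p :=
      funext fun p => Real.exp_log (by linarith [hone (p : ℕ) p.2])
    exact hfun ▸ hsum.hasSum.rexp
  have hM : Multipliable (fun p : Nat.Primes => F p) := ⟨_, hProd⟩
  refine ⟨hM, fun ε hε => ?_⟩
  set P : ℝ := ∏' p : Nat.Primes, F p with hP
  have hP1 : (1 : ℝ) ≤ P := by
    rw [hP, hProd.tprod_eq]
    exact Real.one_le_exp (tsum_nonneg fun p => Real.log_nonneg (hone (p : ℕ) p.2))
  have hlt : (1 - ε ^ 2) * P < P := by nlinarith
  obtain ⟨S, hS⟩ := (Filter.eventually_atTop).mp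
    (hM.hasProd.eventually (eventually_gt_nhds hlt))
  set S' : Finset ℕ := S.map ⟨fun p : Nat.Primes => (p : ℕ), Nat.Primes.coe_nat_injective⟩ with hS'
  have hS'prime : ∀ q ∈ S', q.Prime := by
    intro q hq
    simp only [hS', Finset.mem_map, Function.Embedding.coeFn_mk] at hq
    obtain ⟨p, _, rfl⟩ := hq
    exact p.2
  refine ⟨∏ q ∈ S', q, ?_, ?_⟩
  · exact Nat.one_le_iff_ne_zero.mpr
      (Finset.prod_ne_zero_iff.mpr fun q hq => (hS'prime q hq).pos.ne')
  · intro t ht hdvd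
    set m : ℕ := ∏ q ∈ S', q with hm
    set g : ℕ := Finset.univ.gcd fun i => (t i).natAbs with hg
    have hg0 : g ≠ 0 := by
      intro h
      apply ht
      funext i
      have := (Finset.gcd_eq_zero_iff.mp h) i (Finset.mem_univ i)
      simpa [Int.natAbs_eq_zero] using this
    have hmg : m ∣ g := by
      refine Finset.dvd_gcd fun i _ => ?_
      have := Int.natAbs_dvd_natAbs.mpr (hdvd i)
      simpa using this
    have hsub : m.primeFactors ⊆ g.primeFactors := Nat.primeFactors_mono hmg hg0
    have hpf : m.primeFactors = S' := Nat.primeFactors_prod hS'prime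
    have hone_pf : ∀ s : Finset ℕ, (∀ q ∈ s, q.Prime) → (1 : ℝ) ≤ ∏ q ∈ s, F q := by
      intro s hs
      have := Finset.prod_le_prod (f := fun _ : ℕ => (1 : ℝ)) (g := F)
        (fun i _ => zero_le_one) (fun i hi => hone i (hs i hi))
      simpa using this
    have h1 : ∏ q ∈ m.primeFactors, F q ≤ ∏ q ∈ g.primeFactors, F q := by
      rw [← Finset.prod_sdiff hsub]
      have hd : (1 : ℝ) ≤ ∏ q ∈ g.primeFactors \ m.primeFactors, F q :=
        hone_pf _ fun q hq => Nat.prime_of_mem_primeFactors (Finset.mem_sdiff.mp hq).1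
      have hm1 : (0 : ℝ) ≤ ∏ q ∈ m.primeFactors, F q := by
        have := hone_pf m.primeFactors fun q hq => Nat.prime_of_mem_primeFactors hq
        linarith
      nlinarith
    have h2 : ∏ q ∈ m.primeFactors, F q = ∏ p ∈ S, F p := by
      rw [hpf, hS', Finset.prod_map]
      rfl
    have h3 : (1 - ε ^ 2) * P < ∏ p ∈ S, F p := hS S le_rfl
    calc (1 - ε ^ 2) * P < ∏ p ∈ S, F p := h3
      _ = ∏ q ∈ m.primeFactors, F q := h2.symm
      _ ≤ ∏ q ∈ g.primeFactors, F q := h1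
end

section
/- Let A := {k ∈ ℤ : ∃ n ∈ ℕ, ∃ j ∈ ℤ, k = 2·4^n·j + (4^n − 1)}, i.e. A = ⋃_{n ≥ 0} (2·4^n ℤ + (4^n − 1)). Then A satisfies the fixed point equation A = 2ℤ ∪ (4A + 3), that is, A equals the union of the set of even integers and the set {4a + 3 : a ∈ A}. -/
/-- The set `Λ_a = ⋃_{n ≥ 0} (2·4^n ℤ + (4^n − 1))` of left endpoints of `a`-intervals of the
period doubling chain satisfies the fixed point equation `Λ_a = 2ℤ ∪ (4Λ_a + 3)`. -/
theorem periodDoubling_a_fixedPoint :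
    {k : ℤ | ∃ n : ℕ, ∃ j : ℤ, k = 2 * 4 ^ n * j + (4 ^ n - 1)} =
      {k : ℤ | ∃ j : ℤ, k = 2 * j} ∪
      {k : ℤ | ∃ a ∈ {k : ℤ | ∃ n : ℕ, ∃ j : ℤ, k = 2 * 4 ^ n * j + (4 ^ n - 1)},
        k = 4 * a + 3} := by
  ext k
  simp only [Set.mem_setOf_eq, Set.mem_union]
  constructor
  · rintro ⟨n, j, rfl⟩
    cases n with
    | zero => left; exact ⟨j, by ring⟩
    | succ m =>
        right
        exact ⟨2 * 4 ^ m * j + (4 ^ m - 1), ⟨m, j, rfl⟩, by ring⟩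
  · rintro (⟨j, rfl⟩ | ⟨a, ⟨n, j, rfl⟩, rfl⟩)
    · exact ⟨0, j, by ring⟩
    · exact ⟨n + 1, j, by ring⟩
end

section
/- Let B := {k ∈ ℤ : ∃ n ≥ 1, ∃ j ∈ ℤ, k = 4^n·j + (2·4^{n−1} − 1)} ∪ {−1}, i.e. B = ⋃_{n ≥ 1} (4^n ℤ + (2·4^{n−1} − 1)) ∪ {−1}. Then B satisfies the fixed point equation B = (4ℤ + 1) ∪ (4B + 3), that is, B equals the union of the arithmetic progression {4j + 1 : j ∈ ℤ} and the set {4b + 3 : b ∈ B}. -/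
/-- The set `Λ_b = ⋃_{n ≥ 1} (4^n ℤ + (2·4^{n-1} − 1)) ∪ {−1}` of left endpoints of
`b`-intervals of the period doubling chain satisfies the fixed point equation
`Λ_b = (4ℤ + 1) ∪ (4Λ_b + 3)`. -/
theorem periodDoubling_b_fixedPoint :
    ({k : ℤ | ∃ n : ℕ, ∃ j : ℤ, k = 4 ^ (n + 1) * j + (2 * 4 ^ n - 1)} ∪ {-1}) =
      {k : ℤ | ∃ j : ℤ, k = 4 * j + 1} ∪
      {k : ℤ | ∃ b ∈ ({k : ℤ | ∃ n : ℕ, ∃ j : ℤ, k = 4 ^ (n + 1) * j + (2 * 4 ^ n - 1)} ∪ {-1}),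
        k = 4 * b + 3} := by
  ext k
  simp only [Set.mem_union, Set.mem_setOf_eq, Set.mem_singleton_iff]
  constructor
  · rintro (⟨n, j, rfl⟩ | rfl)
    · match n with
      | 0 => exact Or.inl ⟨j, by ring⟩
      | n + 1 =>
        refine Or.inr ⟨4 ^ (n + 1) * j + (2 * 4 ^ n - 1), Or.inl ⟨n, j, rfl⟩, by ring⟩
    · exact Or.inr ⟨-1, Or.inr rfl, by ring⟩
  · rintro (⟨j, rfl⟩ | ⟨b, (⟨n, j, rfl⟩ | rfl), rfl⟩)
    · exact Or.inl ⟨0, j, by ring⟩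
    · exact Or.inl ⟨n + 1, j, by ring⟩
    · exact Or.inr (by ring)
end

section
/- Let A := ⋃_{n ≥ 0} (2·4^n ℤ + (4^n − 1)) and B := ⋃_{n ≥ 1} (4^n ℤ + (2·4^{n−1} − 1)) ∪ {−1} as subsets of ℤ, and regard them as subsets of the 2-adic integers ℤ₂ via the canonical embedding ℤ → ℤ₂. Then the closures of A and of B in ℤ₂ satisfy: closure(A) ∪ closure(B) = ℤ₂ and closure(A) ∩ closure(B) = {−1}. -/
/-!
Write `v` for the 2-adic valuation. The integers in `A` are exactly the `k` with `v(k + 1)` even,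
and those in `B \ {-1}` the `k` with `v(k + 1)` odd. The level sets of `v(x + 1)` on `ℤ₂ \ {-1}`
are spheres around `-1`, which are open in the ultrametric space `ℤ₂`, and `ℤ` is dense in `ℤ₂`.
Hence the closure of `A` is `{v(x + 1) even}` together with its limit point `-1` (as
`4 ^ n - 1 → -1`), and the closure of `B` is `{v(x + 1) odd} ∪ {-1}`.
-/

open Metric Set Filter PadicInt

theorem DenseRange.closure_image_preimage_of_isOpen {X α : Type*} [TopologicalSpace X]
    {f : α → X} {U : Set X} (hf : DenseRange f) (hU : IsOpen U) :
    closure (f '' (f ⁻¹' U)) = closure U :=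
  (closure_mono (image_preimage_subset f U)).antisymm
    (closure_minimal (hf.subset_closure_image_preimage_of_isOpen hU) isClosed_closure)

namespace PadicInt

variable {p : ℕ} [Fact p.Prime]

/-- The points `x ≠ c` with `v(x - c) ∈ S`. -/
def shells (c : ℤ_[p]) (S : Set ℕ) : Set ℤ_[p] :=
  ⋃ m ∈ S, sphere c ((p : ℝ) ^ (-(m : ℤ)))

lemma mem_shells {c x : ℤ_[p]} {S : Set ℕ} :
    x ∈ shells c S ↔ ∃ m ∈ S, ‖x - c‖ = (p : ℝ) ^ (-(m : ℤ)) := by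
  simp [shells]

lemma isOpen_shells (c : ℤ_[p]) (S : Set ℕ) : IsOpen (shells c S) :=
  isOpen_biUnion fun _ _ => IsUltrametricDist.isOpen_sphere c
    (zpow_pos (Nat.cast_pos.2 (Fact.out : p.Prime).pos) _).ne'

lemma disjoint_shells (c : ℤ_[p]) {S T : Set ℕ} (h : Disjoint S T) :
    Disjoint (shells c S) (shells c T) := by
  refine Set.disjoint_left.2 fun x hS hT => ?_
  obtain ⟨m, hm, hxm⟩ := mem_shells.1 hS
  obtain ⟨n, hn, hxn⟩ := mem_shells.1 hT
  have hp : (1 : ℝ) < p := mod_cast (Fact.out : p.Prime).one_lt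
  have hmn : m = n := by
    exact_mod_cast neg_injective <|
      zpow_right_injective₀ (by positivity) hp.ne' (hxm.symm.trans hxn)
  exact Set.disjoint_left.1 h hm (hmn ▸ hn)

lemma shells_union_shells_compl (c : ℤ_[p]) (S : Set ℕ) :
    shells c S ∪ shells c Sᶜ = {c}ᶜ := by
  ext x
  simp only [mem_union, mem_shells, mem_compl_iff, mem_singleton_iff]
  constructor
  · rintro (⟨m, -, h⟩ | ⟨m, -, h⟩) rfl <;>
      simp only [sub_self, norm_zero] at h <;>
      exact (zpow_pos (Nat.cast_pos.2 (Fact.out : p.Prime).pos) _).ne h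
  · intro hx
    have hv := norm_eq_zpow_neg_valuation (sub_ne_zero.2 hx)
    by_cases hm : (x - c).valuation ∈ S
    exacts [Or.inl ⟨_, hm, hv⟩, Or.inr ⟨_, hm, hv⟩]

lemma center_notMem_shells (c : ℤ_[p]) (S : Set ℕ) : c ∉ shells c S := fun h =>
  (shells_union_shells_compl c S ▸ Or.inl h : c ∈ ({c}ᶜ : Set ℤ_[p])) rfl

lemma compl_shells (c : ℤ_[p]) (S : Set ℕ) : (shells c S)ᶜ = insert c (shells c Sᶜ) := by
  rw [compl_eq_comm, insert_eq, compl_union, ← shells_union_shells_compl c S, ← sdiff_eq,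
    union_sdiff_right, (disjoint_shells c disjoint_compl_right).sdiff_eq_left]

lemma insert_closure_shells (c : ℤ_[p]) (S : Set ℕ) :
    insert c (closure (shells c S)) = (shells c Sᶜ)ᶜ := by
  refine subset_antisymm (insert_subset (center_notMem_shells c _) ?_) ?_
  · exact closure_minimal ((disjoint_shells c disjoint_compl_right).subset_compl_right)
      (isOpen_shells c _).isClosed_compl
  · rw [compl_shells, compl_compl]
    exact insert_subset_insert subset_closure

lemma center_mem_closure_shells (c : ℤ_[p]) {S : Set ℕ} (hS : S.Infinite) :
    c ∈ closure (shells c S) := by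
  have hp : ‖(p : ℤ_[p])‖ < 1 := by simp [norm_p, inv_lt_one_iff₀, (Fact.out : p.Prime).one_lt]
  refine mem_closure_of_frequently_of_tendsto (f := fun m : ℕ => c + (p : ℤ_[p]) ^ m)
    (b := atTop) ?_ ?_
  · refine (Nat.frequently_atTop_iff_infinite.2 hS).mono fun m hm => mem_shells.2 ⟨m, hm, ?_⟩
    simp
  · simpa using (tendsto_pow_atTop_nhds_zero_of_norm_lt_one hp).const_add c

lemma closure_shells (c : ℤ_[p]) {S : Set ℕ} (hS : S.Infinite) :
    closure (shells c S) = (shells c Sᶜ)ᶜ := by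
  rw [← insert_closure_shells, insert_eq_of_mem (center_mem_closure_shells c hS)]

lemma norm_intCast_eq_zpow_iff {z : ℤ} {m : ℕ} :
    ‖(z : ℤ_[p])‖ = (p : ℝ) ^ (-(m : ℤ)) ↔ ∃ w : ℤ, z = p ^ m * w ∧ ¬ (p : ℤ) ∣ w := by
  constructor
  · intro h
    obtain ⟨w, rfl⟩ := norm_int_le_pow_iff_dvd.1 h.le
    refine ⟨w, rfl, fun ⟨u, hu⟩ => ?_⟩
    have hle := (norm_int_le_pow_iff_dvd (p := p) (k := p ^ m * w) (n := m + 1)).2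
      ⟨u, by rw [hu]; ring⟩
    rw [h] at hle
    have hp : (1 : ℝ) < p := mod_cast (Fact.out : p.Prime).one_lt
    exact absurd hle (not_le.2 (zpow_lt_zpow_right₀ hp (by omega)))
  · rintro ⟨w, rfl, hw⟩
    have hw1 : ‖(w : ℤ_[p])‖ = 1 :=
      (norm_le_one _).antisymm (not_lt.1 fun h => hw (norm_int_lt_one_iff_dvd w |>.1 h))
    simp [hw1]

lemma intCast_mem_shells_neg_one_iff {k : ℤ} {S : Set ℕ} :
    (k : ℤ_[2]) ∈ shells (-1) S ↔ ∃ m ∈ S, ∃ j : ℤ, k = 2 ^ (m + 1) * j + (2 ^ m - 1) := by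
  have hodd : ∀ w : ℤ, ¬ (2 : ℤ) ∣ w ↔ ∃ j, w = 2 * j + 1 := fun w => by
    rw [← even_iff_two_dvd, Int.not_even_iff_odd, Odd]
  simp only [mem_shells, sub_neg_eq_add, ← Int.cast_one (R := ℤ_[2]), ← Int.cast_add]
  refine exists_congr fun m => and_congr_right fun _ => ?_
  rw [norm_intCast_eq_zpow_iff]
  simp only [Nat.cast_ofNat, hodd]
  constructor
  · rintro ⟨_, hk, j, rfl⟩
    exact ⟨j, by linear_combination hk⟩
  · rintro ⟨j, rfl⟩
    exact ⟨_, by ring, j, rfl⟩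

lemma intCast_preimage_shells_even :
    (Int.cast : ℤ → ℤ_[2]) ⁻¹' shells (-1) {m | Even m} =
      {k : ℤ | ∃ n : ℕ, ∃ j : ℤ, k = 2 * 4 ^ n * j + (4 ^ n - 1)} := by
  ext k
  simp only [mem_preimage, intCast_mem_shells_neg_one_iff, mem_ofPred_eq,
    show (4 : ℤ) = 2 ^ 2 by norm_num, ← pow_mul]
  constructor
  · rintro ⟨_, ⟨n, rfl⟩, j, rfl⟩
    exact ⟨n, j, by ring⟩
  · rintro ⟨n, j, rfl⟩
    exact ⟨n + n, ⟨n, rfl⟩, j, by ring⟩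

lemma intCast_preimage_shells_odd :
    (Int.cast : ℤ → ℤ_[2]) ⁻¹' shells (-1) {m | Odd m} =
      {k : ℤ | ∃ n : ℕ, ∃ j : ℤ, k = 4 ^ (n + 1) * j + (2 * 4 ^ n - 1)} := by
  ext k
  simp only [mem_preimage, intCast_mem_shells_neg_one_iff, mem_ofPred_eq,
    show (4 : ℤ) = 2 ^ 2 by norm_num, ← pow_mul]
  constructor
  · rintro ⟨_, ⟨n, rfl⟩, j, rfl⟩
    exact ⟨n, j, by ring⟩
  · rintro ⟨n, j, rfl⟩
    exact ⟨2 * n + 1, ⟨n, rfl⟩, j, by ring⟩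

end PadicInt

/-- The closures in the 2-adic integers of the sets `Λ_a` and `Λ_b` of left endpoints of the
period doubling chain cover `ℤ₂` and intersect exactly in `{-1}`. -/
theorem periodDoubling_closures_in_padicInt :
    closure ((fun k : ℤ => (k : ℤ_[2])) ''
        {k : ℤ | ∃ n : ℕ, ∃ j : ℤ, k = 2 * 4 ^ n * j + (4 ^ n - 1)}) ∪
      closure ((fun k : ℤ => (k : ℤ_[2])) ''
        ({k : ℤ | ∃ n : ℕ, ∃ j : ℤ, k = 4 ^ (n + 1) * j + (2 * 4 ^ n - 1)} ∪ {-1})) =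
      Set.univ ∧
    closure ((fun k : ℤ => (k : ℤ_[2])) ''
        {k : ℤ | ∃ n : ℕ, ∃ j : ℤ, k = 2 * 4 ^ n * j + (4 ^ n - 1)}) ∩
      closure ((fun k : ℤ => (k : ℤ_[2])) ''
        ({k : ℤ | ∃ n : ℕ, ∃ j : ℤ, k = 4 ^ (n + 1) * j + (2 * 4 ^ n - 1)} ∪ {-1})) =
      {(-1 : ℤ_[2])} := by
  have hEven : {m : ℕ | Even m}ᶜ = {m | Odd m} := by ext; simp
  have hOdd : {m : ℕ | Odd m}ᶜ = {m | Even m} := by ext; simp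
  have hEvenInf : {m : ℕ | Even m}.Infinite :=
    Nat.frequently_atTop_iff_infinite.1 Nat.frequently_even
  have hA : closure ((fun k : ℤ => (k : ℤ_[2])) ''
      {k : ℤ | ∃ n : ℕ, ∃ j : ℤ, k = 2 * 4 ^ n * j + (4 ^ n - 1)}) =
        (shells (-1) {m | Odd m})ᶜ := by
    rw [← intCast_preimage_shells_even,
      denseRange_intCast.closure_image_preimage_of_isOpen (isOpen_shells _ _),
      closure_shells _ hEvenInf, hEven]
  have hB : closure ((fun k : ℤ => (k : ℤ_[2])) ''
      ({k : ℤ | ∃ n : ℕ, ∃ j : ℤ, k = 4 ^ (n + 1) * j + (2 * 4 ^ n - 1)} ∪ {-1})) =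
        (shells (-1) {m | Even m})ᶜ := by
    rw [← intCast_preimage_shells_odd, image_union, closure_union, image_singleton,
      denseRange_intCast.closure_image_preimage_of_isOpen (isOpen_shells _ _),
      closure_singleton, Int.cast_neg, Int.cast_one, union_singleton, insert_closure_shells, hOdd]
  rw [hA, hB, ← compl_inter, ← compl_union, ← hEven, inter_comm, union_comm,
    (disjoint_shells _ disjoint_compl_right).inter_eq, shells_union_shells_compl,
    compl_empty, compl_compl]
  exact ⟨rfl, rfl⟩
end

section
/- Let G be a locally compact Hausdorff abelian topological group endowed with its Borel σ-algebra, K ⊆ G a compact neighbourhood of 0, and g : G → ℂ continuous with compact support. Then there exists a constant C > 0 (depending only on g and K) such that for every (positive, Borel) measure μ on G, every real M ≥ 0 with μ(t + K) ≤ M for all t ∈ G, and every x ∈ G, ∫ |g(x − y)| dμ(y) ≤ C · (sup_{u∈G} |g(u)|) · M; in particular the integral ∫ g(x − y) dμ(y) exists and satisfies |∫ g(x − y) dμ(y)| ≤ C · ‖g‖_∞ · M. -/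
/-!
Finitely many translates `p + K` cover the compact set `-tsupport g`, so every translate of it,
in particular the support of `y ↦ g (x - y)`, has `μ`-measure at most `n M` with `n` depending
only on `g` and `K`. A function bounded by `‖g‖_∞` and supported on a set of measure `≤ n M`
has integral of its norm at most `n ‖g‖_∞ M`.
-/

open scoped Pointwise ENNReal
open MeasureTheory Set Function

section TranslationBounded

variable {G : Type*} [AddCommGroup G] [TopologicalSpace G] [IsTopologicalAddGroup G]
  [MeasurableSpace G]

theorem exists_measure_singleton_add_le_of_isCompact {K L : Set G} (hK0 : K ∈ nhds (0 : G))
    (hL : IsCompact L) :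
    ∃ n : ℕ, ∀ (μ : Measure G) (M : ℝ≥0∞), (∀ t, μ ({t} + K) ≤ M) →
      ∀ x, μ ({x} + L) ≤ n * M := by
  obtain ⟨F, hF⟩ :=
    compact_covered_by_add_left_translates hL ⟨0, mem_interior_iff_mem_nhds.2 hK0⟩
  refine ⟨F.card, fun μ M hμ x => ?_⟩
  have hcover : {x} + L ⊆ ⋃ p ∈ F, {x - p} + K := by
    rintro _ ⟨_, hx, l, hl, rfl⟩
    rw [mem_singleton_iff.1 hx]
    obtain ⟨p, hp, hpl⟩ := mem_iUnion₂.1 (hF hl)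
    exact mem_iUnion₂.2 ⟨p, hp, x - p, rfl, p + l, hpl, by simp only [← add_assoc, sub_add_cancel]⟩
  calc μ ({x} + L) ≤ ∑ p ∈ F, μ ({x - p} + K) :=
        (measure_mono hcover).trans (measure_biUnion_finset_le F _)
    _ ≤ ∑ _p ∈ F, M := Finset.sum_le_sum fun p _ => hμ (x - p)
    _ = F.card * M := by simp

end TranslationBounded

section SupportSubset

variable {α E : Type*} [MeasurableSpace α] [NormedAddCommGroup E] {μ : Measure α} {f : α → E}
  {s : Set α} {C : ℝ}

theorem Integrable.of_support_subset_of_norm_le (hf : AEStronglyMeasurable f μ) (hs : μ s < ∞)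
    (hfs : support f ⊆ s) (hC : ∀ y, ‖f y‖ ≤ C) : Integrable f μ :=
  (integrableOn_iff_integrable_of_support_subset hfs).1
    (Measure.integrableOn_of_bounded hs.ne hf (.of_forall hC))

theorem integral_norm_le_of_support_subset (hs : μ s < ∞) (hfs : support f ⊆ s)
    (hC : ∀ y, ‖f y‖ ≤ C) : ∫ y, ‖f y‖ ∂μ ≤ C * μ.real s := by
  have hzero : ∀ y ∉ s, ‖f y‖ = 0 := fun y hy =>
    norm_eq_zero.2 (notMem_support.1 fun h => hy (hfs h))
  calc ∫ y, ‖f y‖ ∂μ = ∫ y in s, ‖f y‖ ∂μ :=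
        (setIntegral_eq_integral_of_forall_compl_eq_zero hzero).symm
    _ ≤ ‖∫ y in s, ‖f y‖ ∂μ‖ := Real.le_norm_self _
    _ ≤ C * μ.real s := norm_setIntegral_le_of_norm_le_const hs fun y _ => by simpa using hC y

end SupportSubset

theorem support_comp_sub_left_subset {G β : Type*} [AddCommGroup G] [TopologicalSpace G]
    [Zero β] (g : G → β) (x : G) :
    support (fun y => g (x - y)) ⊆ {x} + -tsupport g := fun y hy =>
  ⟨x, rfl, -(x - y), by simpa using subset_tsupport g hy, by simp only [neg_sub, add_sub_cancel]⟩

theorem convolution_translation_bounded_estimate_general {G : Type*} [AddCommGroup G]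
    [TopologicalSpace G] [IsTopologicalAddGroup G]
    [MeasurableSpace G] [BorelSpace G]
    (K : Set G) (hK0 : K ∈ nhds (0 : G))
    (g : G → ℂ) (hgc : Continuous g) (hgsupp : HasCompactSupport g) :
    ∃ C : ℝ, 0 < C ∧
      ∀ μ : Measure G, ∀ M : ℝ, 0 ≤ M → (∀ t : G, μ ({t} + K) ≤ ENNReal.ofReal M) →
        ∀ x : G,
          (∫ y, ‖g (x - y)‖ ∂μ) ≤ C * (⨆ u : G, ‖g u‖) * M ∧
          Integrable (fun y => g (x - y)) μ ∧
          ‖∫ y, g (x - y) ∂μ‖ ≤ C * (⨆ u : G, ‖g u‖) * M := by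
  set S := ⨆ u : G, ‖g u‖
  have hgS : ∀ u, ‖g u‖ ≤ S := le_ciSup (hgc.norm.bddAbove_range_of_hasCompactSupport hgsupp.norm)
  have hS : 0 ≤ S := (norm_nonneg _).trans (hgS 0)
  obtain ⟨n, hn⟩ := exists_measure_singleton_add_le_of_isCompact hK0 hgsupp.isCompact.neg
  refine ⟨n + 1, by positivity, fun μ M hM hμ x => ?_⟩
  set T := {x} + -tsupport g
  have hμT : μ T ≤ ENNReal.ofReal (n * M) := by
    rw [ENNReal.ofReal_mul (by positivity), ENNReal.ofReal_natCast]
    exact hn μ _ hμ x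
  have hT : μ T < ∞ := hμT.trans_lt ENNReal.ofReal_lt_top
  have hgx : ∀ y, ‖g (x - y)‖ ≤ S := fun y => hgS (x - y)
  have hbound : ∫ y, ‖g (x - y)‖ ∂μ ≤ (n + 1) * S * M :=
    calc ∫ y, ‖g (x - y)‖ ∂μ ≤ S * μ.real T :=
          integral_norm_le_of_support_subset hT (support_comp_sub_left_subset g x) hgx
      _ ≤ S * (n * M) := by gcongr; exact ENNReal.toReal_le_of_le_ofReal (by positivity) hμT
      _ ≤ (n + 1) * S * M := by nlinarith [mul_nonneg hS hM]
  refine ⟨hbound, ?_, (norm_integral_le_integral_norm _).trans hbound⟩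
  exact Integrable.of_support_subset_of_norm_le
    (hgc.comp (continuous_sub_left x)).aestronglyMeasurable hT
    (support_comp_sub_left_subset g x) hgx

/-- Key convolution estimate: for a continuous compactly supported `g` on a locally compact
abelian group and a compact neighbourhood `K` of `0`, there is a constant `C > 0` such that
for every measure `μ` which is translation bounded with bound `M` (i.e. `μ(t + K) ≤ M` for
all `t`), the convolution integrals satisfy `∫ |g(x − y)| dμ(y) ≤ C ‖g‖_∞ M`; in particular
`y ↦ g(x − y)` is integrable and `|∫ g(x − y) dμ(y)| ≤ C ‖g‖_∞ M`. -/
theorem convolution_translation_bounded_estimate {G : Type*} [AddCommGroup G]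
    [TopologicalSpace G] [IsTopologicalAddGroup G] [LocallyCompactSpace G] [T2Space G]
    [MeasurableSpace G] [BorelSpace G]
    (K : Set G) (hK : IsCompact K) (hK0 : K ∈ nhds (0 : G))
    (g : G → ℂ) (hgc : Continuous g) (hgsupp : HasCompactSupport g) :
    ∃ C : ℝ, 0 < C ∧
      ∀ μ : Measure G, ∀ M : ℝ, 0 ≤ M → (∀ t : G, μ ({t} + K) ≤ ENNReal.ofReal M) →
        ∀ x : G,
          (∫ y, ‖g (x - y)‖ ∂μ) ≤ C * (⨆ u : G, ‖g u‖) * M ∧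
          Integrable (fun y => g (x - y)) μ ∧
          ‖∫ y, g (x - y) ∂μ‖ ≤ C * (⨆ u : G, ‖g u‖) * M :=
  convolution_translation_bounded_estimate_general K hK0 g hgc hgsupp
end

section
/- Let G be a locally compact Hausdorff abelian topological group and η : G → ℂ a bounded function whose support Δ := {z ∈ G : η(z) ≠ 0} has uniformly discrete difference set Δ − Δ. For continuous compactly supported g : G → ℂ let (g ∗ μ)(x) := ∑_{z ∈ Δ} η(z)·g(x − z) (for each x a finite sum, since Δ is uniformly discrete). Assume μ is Bochner (strongly) almost periodic: for every continuous compactly supported g : G → ℂ and every δ > 0 there exist finitely many t₁, …, t_n ∈ G such that for every t ∈ G there is an index i with sup_{x ∈ G} |(g ∗ μ)(x) − (g ∗ μ)(x − (t − t_i))| < δ. Then μ is norm almost periodic: for every compact neighbourhood K of 0 in G and every ε > 0, the set {t ∈ G : N_K(t) < ε} is relatively dense in G, where N_K(t) := sup_{x ∈ G} ∑_{z ∈ (Δ ∪ (t + Δ)) ∩ (x + K)} |η(z − t) − η(z)| (each sum finite, N_K(t) finite). -/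
/-! Let `Δ` be the support of `η`. Choose a compact neighbourhood `W` of `0` so small that distinct
points of the uniformly discrete set `Δ - Δ` never differ by an element of `W - W`, and an even
bump `g` supported in `W` with `g 0 = 1`. Then `g ∗ μ` sees at most one atom of `μ` near any point;
in particular `(g ∗ μ)(p) = η p` for `p ∈ Δ`. Given a `δ`-almost period `s` of `g ∗ μ`, let `s'` be
the unique element of `Δ - Δ` in `s + W` (or `s` if there is none). Comparing `g ∗ μ` at `z` with
`z - s`, and at `z - s' + s` with `z - s'`, bounds `|η(z - s') - η z|` by `2δ` for every `z`. A set
separated by `W - W` meets a translate of `K` in at most `#F` points, where `K` is covered by the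
translates of `W` by `F`, so `N_K(s') ≤ 4 #F δ`. Since `s'` is within `W` of `s`, and the
`δ`-almost periods of `g ∗ μ` are relatively dense, so are the `s'`.
-/

open scoped Pointwise

/-- A subset `P` of a topological abelian group is uniformly discrete if there is an open
neighbourhood `V` of `0` such that `(t + V) ∩ P = {t}` for every `t ∈ P`. -/
def UniformlyDiscrete {G : Type*} [AddCommGroup G] [TopologicalSpace G] (P : Set G) : Prop :=
  ∃ V : Set G, IsOpen V ∧ (0 : G) ∈ V ∧ ∀ t ∈ P, ({t} + V) ∩ P = {t}

/-- The `K`-norm `‖δ_t ∗ μ − μ‖_K` of the difference between the pure point measure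
`μ = ∑_{z ∈ Δ} η(z) δ_z` and its translate by `t`:
`N_K(t) = sup_x ∑_{z ∈ (Δ ∪ (t+Δ)) ∩ (x+K)} |η(z−t) − η(z)|`. -/
noncomputable def muKNorm {G : Type*} [AddCommGroup G] [TopologicalSpace G]
    (η : G → ℂ) (K : Set G) (t : G) : ℝ :=
  ⨆ x : G, ∑' z : ↥(({z : G | η z ≠ 0} ∪ ({t} + {z : G | η z ≠ 0})) ∩ ({x} + K)),
    ‖η ((z : G) - t) - η (z : G)‖

open Set Function Filter Topology

section Separated

variable {G : Type*} [AddCommGroup G]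

def SeparatedBy (S V : Set G) : Prop :=
  ∀ a ∈ S, ∀ b ∈ S, a - b ∈ V → a = b

lemma UniformlyDiscrete.exists_separatedBy [TopologicalSpace G] {P : Set G}
    (h : UniformlyDiscrete P) : ∃ V ∈ 𝓝 (0 : G), SeparatedBy P V := by
  obtain ⟨V, hVo, hV0, hV⟩ := h
  refine ⟨V, hVo.mem_nhds hV0, fun a ha b hb hab => ?_⟩
  have hmem : a ∈ ({b} + V) ∩ P := ⟨⟨b, rfl, a - b, hab, add_sub_cancel _ _⟩, ha⟩
  rwa [hV b hb] at hmem

lemma inter_singleton_add_subset_biUnion {S K W : Set G} {F : Finset G}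
    (hKF : K ⊆ ⋃ y ∈ F, {y} + W) (x : G) :
    S ∩ ({x} + K) ⊆ ⋃ y ∈ F, S ∩ ({x + y} + W) := by
  rintro _ ⟨hz, _, rfl, k, hk, rfl⟩
  obtain ⟨y, hy, hky⟩ := mem_iUnion₂.mp (hKF hk)
  refine mem_iUnion₂.mpr ⟨y, hy, hz, ?_⟩
  rw [← singleton_add_singleton, add_assoc]
  exact add_mem_add rfl hky

namespace SeparatedBy

variable {S V W : Set G}

lemma of_sub (h : SeparatedBy (S - S) V) : SeparatedBy S V := fun a ha b hb hab =>
  (sub_right_inj.mp (h _ (sub_mem_sub ha hb) _ (sub_mem_sub ha ha) (by simpa using hab))).symm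

lemma singleton_add (h : SeparatedBy S V) (t : G) : SeparatedBy ({t} + S) V := by
  rintro _ ⟨_, rfl, a, ha, rfl⟩ _ ⟨_, rfl, b, hb, rfl⟩ hab
  rw [h a ha b hb (by simpa using hab)]

lemma exists_forall_sub_mem_eq (h : SeparatedBy S V) (hWV : W - W ⊆ V) (hW : (0 : G) ∈ W)
    (y : G) : ∃ w₀, w₀ - y ∈ W ∧ ∀ w ∈ S, w - y ∈ W → w = w₀ := by
  by_cases hex : ∃ w₀ ∈ S, w₀ - y ∈ W
  · obtain ⟨w₀, hw₀, hw₀y⟩ := hex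
    exact ⟨w₀, hw₀y, fun w hw hwy => h w hw w₀ hw₀ (by simpa using hWV (sub_mem_sub hwy hw₀y))⟩
  · exact ⟨y, by simpa using hW, fun w hw hwy => (hex ⟨w, hw, hwy⟩).elim⟩

lemma subsingleton_inter_singleton_add (h : SeparatedBy S V) (hWV : W - W ⊆ V) (y : G) :
    (S ∩ ({y} + W)).Subsingleton := by
  rintro _ ⟨ha, _, rfl, u, hu, rfl⟩ _ ⟨hb, _, rfl, v, hv, rfl⟩
  exact h _ ha _ hb (by simpa using hWV (sub_mem_sub hu hv))

variable {K : Set G} {F : Finset G}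

lemma finite_inter_singleton_add (h : SeparatedBy S V) (hWV : W - W ⊆ V)
    (hKF : K ⊆ ⋃ y ∈ F, {y} + W) (x : G) : (S ∩ ({x} + K)).Finite :=
  (F.finite_toSet.biUnion fun y _ => (h.subsingleton_inter_singleton_add hWV (x + y)).finite).subset
    (inter_singleton_add_subset_biUnion hKF x)

lemma ncard_inter_singleton_add_le (h : SeparatedBy S V) (hWV : W - W ⊆ V)
    (hKF : K ⊆ ⋃ y ∈ F, {y} + W) (x : G) : (S ∩ ({x} + K)).ncard ≤ F.card := by
  have hsub := fun y => h.subsingleton_inter_singleton_add hWV (x + y)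
  have hfin := F.finite_toSet.biUnion fun y _ => (hsub y).finite
  calc (S ∩ ({x} + K)).ncard ≤ (⋃ y ∈ F, S ∩ ({x + y} + W)).ncard :=
        ncard_le_ncard (inter_singleton_add_subset_biUnion hKF x) hfin
    _ ≤ ∑ y ∈ F, (S ∩ ({x + y} + W)).ncard := F.set_ncard_biUnion_le _
    _ ≤ ∑ _y ∈ F, 1 := Finset.sum_le_sum fun y _ => (ncard_le_one (hsub y).finite).mpr (hsub y)
    _ = F.card := by simp

end SeparatedBy

end Separated

lemma Set.Finite.tsum_le_ncard_mul {α : Type*} {s : Set α} (hs : s.Finite) {f : α → ℝ} {c : ℝ}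
    (h : ∀ x ∈ s, f x ≤ c) : ∑' x : s, f x ≤ s.ncard * c := by
  have := hs.fintype
  rw [tsum_fintype, ← Nat.card_coe_set_eq, Nat.card_eq_fintype_card, ← Finset.card_univ,
    ← nsmul_eq_mul]
  exact Finset.sum_le_card_nsmul _ _ _ fun x _ => h x x.2

lemma norm_sub_le_two_mul_of_near {a b : ℂ} {c δ : ℝ} (hc0 : 0 ≤ c) (hc1 : c ≤ 1) (hδ : 0 ≤ δ)
    (ha : a ≠ 0 → ‖a - b * c‖ < δ) (hb : b ≠ 0 → ‖a * c - b‖ < δ) : ‖b - a‖ ≤ 2 * δ := by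
  rcases eq_or_ne a 0 with rfl | ha0
  · rcases eq_or_ne b 0 with rfl | hb0
    · simpa using hδ
    · simpa using (hb hb0).le.trans (by linarith)
  rcases eq_or_ne b 0 with rfl | hb0
  · simpa using (ha ha0).le.trans (by linarith)
  have hnc : ‖(c : ℂ)‖ = c := by simp [abs_of_nonneg hc0]
  have hA : ‖a‖ ≤ δ + ‖b‖ * c := by
    calc ‖a‖ ≤ ‖a - b * c‖ + ‖b * c‖ := norm_le_norm_sub_add _ _
      _ ≤ δ + ‖b‖ * c := by rw [norm_mul, hnc]; linarith [ha ha0]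
  have hB : ‖b‖ ≤ δ + ‖a‖ * c := by
    calc ‖b‖ ≤ ‖a * c - b‖ + ‖a * c‖ := by simpa [norm_sub_rev] using norm_le_norm_sub_add b (a * c)
      _ ≤ δ + ‖a‖ * c := by rw [norm_mul, hnc]; linarith [hb hb0]
  -- `‖b‖ (1 - c²) ≤ δ (1 + c)`, hence `‖b‖ (1 - c) ≤ δ`
  have hB' : ‖b‖ * (1 - c) ≤ δ := by nlinarith [norm_nonneg a, norm_nonneg b]
  calc ‖b - a‖ ≤ ‖b - b * c‖ + ‖b * c - a‖ := norm_sub_le_norm_sub_add_norm_sub _ _ _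
    _ = ‖b‖ * (1 - c) + ‖a - b * c‖ := by
        rw [← mul_one_sub, norm_mul, norm_sub_rev (b * c)]
        congr 2
        rw [← Complex.ofReal_one, ← Complex.ofReal_sub, Complex.norm_real,
          Real.norm_of_nonneg (by linarith)]
    _ ≤ 2 * δ := by linarith [ha ha0]

section Bump

variable {G : Type*} [AddCommGroup G] [TopologicalSpace G]

structure IsEvenBump (g : G → ℝ) (W : Set G) : Prop where
  continuous : Continuous g
  hasCompactSupport : HasCompactSupport g
  map_zero : g 0 = 1
  mem_Icc : ∀ x, g x ∈ Icc (0 : ℝ) 1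
  neg_apply : ∀ x, g (-x) = g x
  support_subset : support g ⊆ W

lemma IsEvenBump.zero_mem {g : G → ℝ} {W : Set G} (hg : IsEvenBump g W) : (0 : G) ∈ W :=
  hg.support_subset (by simp [hg.map_zero])

lemma IsEvenBump.sub_mem {g : G → ℝ} {W : Set G} (hg : IsEvenBump g W) {a b : G}
    (h : g (a - b) ≠ 0) : b - a ∈ W :=
  hg.support_subset (by rwa [mem_support, ← neg_sub, hg.neg_apply])

variable [IsTopologicalAddGroup G] [LocallyCompactSpace G]

lemma exists_isEvenBump {W : Set G} (hW : W ∈ 𝓝 0) : ∃ g, IsEvenBump g W := by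
  obtain ⟨f, hf0, hfW, hfc, hf01⟩ := exists_continuous_one_zero_of_isCompact isCompact_singleton
    isOpen_interior.isClosed_compl
    (disjoint_singleton_left.mpr (not_not.mpr (mem_interior_iff_mem_nhds.mpr hW)))
  refine ⟨fun x => f x * f (-x), ⟨by fun_prop, hfc.mul_right, ?_, fun x => ?_, fun x => ?_, ?_⟩⟩
  · simp [show f 0 = 1 from hf0 rfl]
  · exact ⟨mul_nonneg (hf01 x).1 (hf01 _).1, mul_le_one₀ (hf01 x).2 (hf01 _).1 (hf01 _).2⟩
  · simp [mul_comm]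
  · intro x hx
    by_contra hxW
    exact hx (by simp [hfW (fun h => hxW (interior_subset h))])

lemma exists_isCompact_sub_subset {V : Set G} (hV : V ∈ 𝓝 0) :
    ∃ W ∈ 𝓝 (0 : G), IsCompact W ∧ W - W ⊆ V := by
  obtain ⟨U, hU, -, hUneg, hUV⟩ := exists_closed_nhds_zero_neg_eq_add_subset hV
  obtain ⟨W, hW, hWU, hWc⟩ := local_compact_nhds hU
  refine ⟨W, hW, hWc, ?_⟩
  calc W - W ⊆ U - U := sub_subset_sub hWU hWU
    _ = U + U := by rw [sub_eq_add_neg, hUneg]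
    _ ⊆ V := hUV

end Bump

section PurePoint

variable {G : Type*} [AddCommGroup G]

/-- `ppConv η g` is the convolution `g ∗ μ` with the pure point measure `μ = ∑_{z ∈ Δ} η(z) δ_z`. -/
noncomputable def ppConv (η g : G → ℂ) (x : G) : ℂ :=
  ∑' z : {z : G | η z ≠ 0}, η z * g (x - z)

lemma ppConv_eq_of_forall {η g : G → ℂ} {y : G} (w₀ : G)
    (h : ∀ w, η w ≠ 0 → g (y - w) ≠ 0 → w = w₀) : ppConv η g y = η w₀ * g (y - w₀) := by
  rw [ppConv, tsum_subtype_eq_of_support_subset (f := fun z => η z * g (y - z)) (s := {z | η z ≠ 0})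
    fun z hz => left_ne_zero_of_mul hz]
  refine tsum_eq_single w₀ fun w hw => ?_
  by_contra hne
  exact hw (h w (left_ne_zero_of_mul hne) (right_ne_zero_of_mul hne))

variable [TopologicalSpace G] {η : G → ℂ} {g : G → ℝ} {V W : Set G}

lemma norm_ppConv_le (hsep : SeparatedBy {z | η z ≠ 0} V) (hWV : W - W ⊆ V)
    (hg : IsEvenBump g W) {B : ℝ} (hB : ∀ z, ‖η z‖ ≤ B) (y : G) :
    ‖ppConv η (fun x => (g x : ℂ)) y‖ ≤ B := by
  obtain ⟨w₀, -, hw₀⟩ := hsep.exists_forall_sub_mem_eq hWV hg.zero_mem y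
  rw [ppConv_eq_of_forall w₀ fun w hw hgw => hw₀ w hw (hg.sub_mem (Complex.ofReal_ne_zero.mp hgw)),
    norm_mul, Complex.norm_real, Real.norm_of_nonneg (hg.mem_Icc _).1]
  exact (mul_le_of_le_one_right (norm_nonneg _) (hg.mem_Icc _).2).trans (hB w₀)

lemma ppConv_self (hsep : SeparatedBy {z | η z ≠ 0} V) (hWV : W - W ⊆ V)
    (hg : IsEvenBump g W) {p : G} (hp : η p ≠ 0) : ppConv η (fun x => (g x : ℂ)) p = η p := by
  obtain ⟨w₀, -, hw₀⟩ := hsep.exists_forall_sub_mem_eq hWV hg.zero_mem p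
  have hpw₀ : p = w₀ := hw₀ p hp (by simpa using hg.zero_mem)
  rw [ppConv_eq_of_forall p fun w hw hgw => ?_, sub_self, hg.map_zero, Complex.ofReal_one, mul_one]
  rw [hpw₀]
  exact hw₀ w hw (hg.sub_mem (Complex.ofReal_ne_zero.mp hgw))

variable {s s' : G}

lemma ppConv_sub_eq (hg : IsEvenBump g W)
    (hs' : ∀ d ∈ {z | η z ≠ 0} - {z | η z ≠ 0}, d - s ∈ W → d = s') {p : G} (hp : η p ≠ 0) :
    ppConv η (fun x => (g x : ℂ)) (p - s) = η (p - s') * g (s' - s) := by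
  rw [ppConv_eq_of_forall (p - s') fun w hw hgw => ?_, sub_sub_sub_cancel_left]
  have hpw : p - w - s ∈ W := hg.support_subset <| mem_support.mpr <| by
    rwa [sub_right_comm, ← Complex.ofReal_ne_zero]
  rw [← hs' _ (sub_mem_sub hp hw) hpw, sub_sub_cancel]

lemma ppConv_add_eq (hg : IsEvenBump g W)
    (hs' : ∀ d ∈ {z | η z ≠ 0} - {z | η z ≠ 0}, d - s ∈ W → d = s') {q : G} (hq : η q ≠ 0) :
    ppConv η (fun x => (g x : ℂ)) (q + s) = η (q + s') * g (s' - s) := by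
  rw [ppConv_eq_of_forall (q + s') fun w hw hgw => ?_, add_sub_add_left_eq_sub, ← neg_sub,
    hg.neg_apply]
  have hwq : w - q - s ∈ W := by
    rw [sub_sub]; exact hg.sub_mem (Complex.ofReal_ne_zero.mp hgw)
  rw [← hs' _ (sub_mem_sub hw hq) hwq, add_sub_cancel]

lemma exists_norm_sub_le_of_ppConv (hsepD : SeparatedBy ({z | η z ≠ 0} - {z | η z ≠ 0}) V)
    (hWV : W - W ⊆ V) (hg : IsEvenBump g W) {B : ℝ} (hB : ∀ z, ‖η z‖ ≤ B) {δ : ℝ} (hδ : 0 ≤ δ)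
    (hs : ⨆ x, ‖ppConv η (fun x => (g x : ℂ)) x - ppConv η (fun x => (g x : ℂ)) (x - s)‖ < δ) :
    ∃ s', s' - s ∈ W ∧ ∀ z, ‖η (z - s') - η z‖ ≤ 2 * δ := by
  have hsep := hsepD.of_sub
  obtain ⟨s', hs'W, hs'⟩ := hsepD.exists_forall_sub_mem_eq hWV hg.zero_mem s
  have hbdd : BddAbove (range fun x =>
      ‖ppConv η (fun x => (g x : ℂ)) x - ppConv η (fun x => (g x : ℂ)) (x - s)‖) := by
    refine ⟨B + B, ?_⟩
    rintro _ ⟨x, rfl⟩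
    exact (norm_sub_le _ _).trans
      (add_le_add (norm_ppConv_le hsep hWV hg hB _) (norm_ppConv_le hsep hWV hg hB _))
  have hpt x := (le_ciSup hbdd x).trans_lt hs
  refine ⟨s', hs'W, fun z => norm_sub_le_two_mul_of_near (hg.mem_Icc (s' - s)).1 (hg.mem_Icc _).2 hδ
    (fun hz => ?_) (fun hz => ?_)⟩
  · simpa only [ppConv_self hsep hWV hg hz, ppConv_sub_eq hg hs' hz] using hpt z
  · simpa only [add_sub_cancel_right, ppConv_add_eq hg hs' hz, ppConv_self hsep hWV hg hz,
      sub_add_cancel] using hpt (z - s' + s)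

lemma muKNorm_le (hsep : SeparatedBy {z | η z ≠ 0} V) (hWV : W - W ⊆ V) {K : Set G}
    {F : Finset G} (hKF : K ⊆ ⋃ y ∈ F, {y} + W) {t : G} {c : ℝ}
    (hc : ∀ z, ‖η (z - t) - η z‖ ≤ c) : muKNorm η K t ≤ 2 * F.card * c := by
  have hc0 : 0 ≤ c := (norm_nonneg _).trans (hc 0)
  have hsep' := hsep.singleton_add t
  refine Real.iSup_le (fun x => ?_) (by positivity)
  rw [union_inter_distrib_right]
  calc _ ≤ _ := ((hsep.finite_inter_singleton_add hWV hKF x).union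
          (hsep'.finite_inter_singleton_add hWV hKF x)).tsum_le_ncard_mul fun z _ => hc z
    _ ≤ ((F.card + F.card : ℕ) : ℝ) * c := by
        gcongr
        exact (ncard_union_le _ _).trans (add_le_add (hsep.ncard_inter_singleton_add_le hWV hKF x)
          (hsep'.ncard_inter_singleton_add_le hWV hKF x))
    _ = 2 * F.card * c := by push_cast; ring

end PurePoint

theorem strongly_almost_periodic_implies_norm_almost_periodic_general {G : Type*} [AddCommGroup G]
    [TopologicalSpace G] [IsTopologicalAddGroup G] [LocallyCompactSpace G]
    (η : G → ℂ) (hbd : ∃ B : ℝ, ∀ z : G, ‖η z‖ ≤ B)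
    (hud : UniformlyDiscrete ({z : G | η z ≠ 0} - {z : G | η z ≠ 0}))
    (hap : ∀ g : G → ℂ, Continuous g → HasCompactSupport g → ∀ δ : ℝ, 0 < δ →
      ∃ s : Finset G, ∀ t : G, ∃ ti ∈ s,
        (⨆ x : G, ‖
          ((∑' z : {z : G | η z ≠ 0}, η z * g (x - (z : G))) -
           (∑' z : {z : G | η z ≠ 0}, η z * g (x - (t - ti) - (z : G))))‖) < δ) :
    ∀ K : Set G, IsCompact K → K ∈ nhds (0 : G) → ∀ ε : ℝ, 0 < ε →
      RelativelyDense {t : G | muKNorm η K t < ε} := by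
  intro K hK _ ε hε
  obtain ⟨B, hB⟩ := hbd
  obtain ⟨V, hV, hsepD⟩ := hud.exists_separatedBy
  obtain ⟨W, hW, hWc, hWV⟩ := exists_isCompact_sub_subset hV
  obtain ⟨g, hg⟩ := exists_isEvenBump hW
  obtain ⟨F, -, hKF⟩ := hK.elim_nhds_subcover (fun y => {y} + W) fun y _ => by
    simpa using singleton_add_mem_nhds y hW
  set δ := ε / (4 * F.card + 1) with hδ
  have hδ0 : 0 < δ := by positivity
  obtain ⟨T, hT⟩ := hap (fun x => (g x : ℂ)) (Complex.continuous_ofReal.comp hg.continuous)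
    (hg.hasCompactSupport.comp_left Complex.ofReal_zero) δ hδ0
  refine ⟨T + -W, T.finite_toSet.isCompact.add hWc.neg, eq_univ_of_forall fun t => ?_⟩
  obtain ⟨ti, hti, hsup⟩ := hT t
  obtain ⟨s', hs'W, hs'⟩ := exists_norm_sub_le_of_ppConv hsepD hWV hg hB hδ0.le hsup
  refine ⟨s', ?_, ti + -(s' - (t - ti)), add_mem_add hti (neg_mem_neg.mpr hs'W),
    by beta_reduce; abel⟩
  calc muKNorm η K s' ≤ 2 * F.card * (2 * δ) := muKNorm_le hsepD.of_sub hWV hKF hs'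
    _ < ε := by
      rw [hδ, mul_div_assoc', mul_div_assoc', div_lt_iff₀ (by positivity)]
      linarith

/-- A pure point measure `μ = ∑_{z ∈ Δ} η(z) δ_z` with bounded coefficients, whose support
`Δ` has uniformly discrete difference set `Δ − Δ`, is norm almost periodic as soon as it is
Bochner (strongly) almost periodic, i.e. as soon as all its regularizations
`g ∗ μ` are almost periodic functions in the Bochner (total boundedness) sense. -/
theorem strongly_almost_periodic_implies_norm_almost_periodic {G : Type*} [AddCommGroup G]
    [TopologicalSpace G] [IsTopologicalAddGroup G] [LocallyCompactSpace G] [T2Space G]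
    (η : G → ℂ) (hbd : ∃ B : ℝ, ∀ z : G, ‖η z‖ ≤ B)
    (hud : UniformlyDiscrete ({z : G | η z ≠ 0} - {z : G | η z ≠ 0}))
    (hap : ∀ g : G → ℂ, Continuous g → HasCompactSupport g → ∀ δ : ℝ, 0 < δ →
      ∃ s : Finset G, ∀ t : G, ∃ ti ∈ s,
        (⨆ x : G, ‖
          ((∑' z : {z : G | η z ≠ 0}, η z * g (x - (z : G))) -
           (∑' z : {z : G | η z ≠ 0}, η z * g (x - (t - ti) - (z : G))))‖) < δ) :
    ∀ K : Set G, IsCompact K → K ∈ nhds (0 : G) → ∀ ε : ℝ, 0 < ε →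
      RelativelyDense {t : G | muKNorm η K t < ε} :=
  strongly_almost_periodic_implies_norm_almost_periodic_general η hbd hud hap
end
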